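/- Let X ⊂ ℤ be finite and let P be any pair partition of X. Suppose each F_e : [0,∞) → 𝓛(𝓗_at) (e ∈ E_X) is continuous in operator norm and uniformly bounded, i.e. sup_{r ≥ 0} ‖F_e(r)‖ < ∞, and suppose ∫_{ℝ³} ‖G(k)‖² dk < ∞. Then for every r ≥ 0 the integrand defining C_P(φ)(r) is Bochner integrable, and the map r ↦ C_P(φ)(r) is a bounded, operator-norm continuous function on [0,∞). -/

import Mathlib

open MeasureTheory
open scoped InnerProductSpace

noncomputable section

/-- Momentum space `ℝ³`. -/
abbrev E3 : Type := EuclideanSpace ℝ (Fin 3)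

/-- Junk-valued minimum of a finset of integers. -/
def fmin (s : Finset ℤ) : ℤ := WithTop.untopD 0 s.min

/-- Junk-valued maximum of a finset of integers. -/
def fmax (s : Finset ℤ) : ℤ := WithBot.unbotD 0 s.max

/-- `P` is a pair partition of the finite set `X ⊂ ℤ`. -/
def IsPairPartition (X : Finset ℤ) (P : Finset (Finset ℤ)) : Prop :=
  (∀ p ∈ P, p.card = 2) ∧
  (∀ p ∈ P, ∀ q ∈ P, p ≠ q → Disjoint p q) ∧
  P.biUnion id = X

/-- Two distinct pairs `p, q` are linked. -/
def LinkedPairs (p q : Finset ℤ) : Prop :=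
  p ≠ q ∧ (∃ a ∈ p, ∃ b ∈ q, ∃ c ∈ q, b ≤ a ∧ a ≤ c) ∧
    (∃ a ∈ q, ∃ b ∈ p, ∃ c ∈ p, b ≤ a ∧ a ≤ c)

/-- A pairing `P` is linked if any two of its pairs are joined by a finite
chain of consecutively linked pairs of `P`. -/
def IsLinked (P : Finset (Finset ℤ)) : Prop :=
  ∀ p ∈ P, ∀ q ∈ P, Relation.ReflTransGen
    (fun a b => a ∈ P ∧ b ∈ P ∧ LinkedPairs a b) p q

/-- The next larger element `r_X(j)` of `X` after `j` (junk value if none). -/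
def rX (X : Finset ℤ) (j : ℤ) : ℤ := fmin (X.filter fun y => j < y)

/-- The integration variable attached to the pair `p ∈ P`. -/
def kOf (P : Finset (Finset ℤ)) (k : ↥P → E3) (p : Finset ℤ) : E3 :=
  if h : p ∈ P then k ⟨p, h⟩ else 0

/-- The pair of `P` containing `j` (for a pair partition this is the unique
member of `P` containing `j`). -/
def thePair (P : Finset (Finset ℤ)) (j : ℤ) : Finset ℤ :=
  (P.filter fun p => j ∈ p).biUnion id

/-- `G^♯_j(k)`: the adjoint `G(k_p)*` if `j = min p`, and `G(k_p)` if
`j = max p`, where `p ∈ P` is the pair containing `j`. -/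
def Gsharp {𝓗 : Type*} [NormedAddCommGroup 𝓗] [InnerProductSpace ℂ 𝓗]
    [CompleteSpace 𝓗] (G : E3 → 𝓗 →L[ℂ] 𝓗) (P : Finset (Finset ℤ))
    (k : ↥P → E3) (j : ℤ) : 𝓗 →L[ℂ] 𝓗 :=
  if j = fmin (thePair P j) then
    ContinuousLinearMap.adjoint (G (kOf P k (thePair P j)))
  else G (kOf P k (thePair P j))

/-- `|K_e|_P = ∑_{p ∈ P, min p ≤ min e, max e ≤ max p} |k_p|` for the edge
`e = {a, b}` with `a < b`. -/
def Ksum (P : Finset (Finset ℤ)) (k : ↥P → E3) (a b : ℤ) : ℝ :=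
  ∑ p ∈ P.filter (fun p => fmin p ≤ a ∧ b ≤ fmax p), ‖kOf P k p‖

/-- The integrand of the contraction `𝒞_P(φ)(r)`: the operator product, over
`j ∈ X` in increasing order, of `G^♯_j(k) ⬝ F_{{j, r_X(j)}}(|K_{{j,r_X(j)}}|_P + r)`,
with the `F`-factor omitted for `j = max X`.  Here the edge label `F e` of the
nearest-neighbour edge `e = {j, r_X(j)} ∈ E_X` is recorded as `F j`, indexed
by the left endpoint `j` of the edge. -/
def contractionIntegrand {𝓗 : Type*} [NormedAddCommGroup 𝓗]
    [InnerProductSpace ℂ 𝓗] [CompleteSpace 𝓗] (G : E3 → 𝓗 →L[ℂ] 𝓗)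
    (X : Finset ℤ) (P : Finset (Finset ℤ)) (F : ℤ → ℝ → 𝓗 →L[ℂ] 𝓗)
    (r : ℝ) (k : ↥P → E3) : 𝓗 →L[ℂ] 𝓗 :=
  ((X.sort (· ≤ ·)).map fun j =>
    Gsharp G P k j *
      (if j = fmax X then 1 else F j (Ksum P k j (rX X j) + r))).prod

/-- The contraction `𝒞_P(φ)(r)`: the Bochner integral of the contraction
integrand over `k ∈ (ℝ³)^P` (with respect to the product Lebesgue measure). -/
def contraction {𝓗 : Type*} [NormedAddCommGroup 𝓗]
    [InnerProductSpace ℂ 𝓗] [CompleteSpace 𝓗] (G : E3 → 𝓗 →L[ℂ] 𝓗)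
    (X : Finset ℤ) (P : Finset (Finset ℤ)) (F : ℤ → ℝ → 𝓗 →L[ℂ] 𝓗)
    (r : ℝ) : 𝓗 →L[ℂ] 𝓗 :=
  ∫ k : ↥P → E3, contractionIntegrand G X P F r k

set_option synthInstance.maxHeartbeats 1000000
set_option maxHeartbeats 1000000

section AuxLemmas

variable {𝓗 : Type*} [NormedAddCommGroup 𝓗] [InnerProductSpace ℂ 𝓗] [CompleteSpace 𝓗]

lemma list_norm_prod_le (l : List (𝓗 →L[ℂ] 𝓗)) : ‖l.prod‖ ≤ (l.map norm).prod := by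
  induction l with
  | nil =>
    simp only [List.prod_nil, List.map_nil]
    rw [ContinuousLinearMap.one_def]
    exact ContinuousLinearMap.norm_id_le
  | cons a t ih =>
    simp only [List.prod_cons, List.map_cons]
    calc ‖a * t.prod‖ ≤ ‖a‖ * ‖t.prod‖ := norm_mul_le _ _
    _ ≤ ‖a‖ * (t.map norm).prod := mul_le_mul_of_nonneg_left ih (norm_nonneg a)

lemma thePair_eq {X : Finset ℤ} {P : Finset (Finset ℤ)} (hP : IsPairPartition X P)
    {j : ℤ} {p : Finset ℤ} (hp : p ∈ P) (hj : j ∈ p) : thePair P j = p := by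
  have hfil : P.filter (fun q => j ∈ q) = {p} := by
    apply Finset.eq_singleton_iff_unique_mem.mpr
    refine ⟨Finset.mem_filter.mpr ⟨hp, hj⟩, ?_⟩
    intro q hq
    rw [Finset.mem_filter] at hq
    by_contra hne
    exact (Finset.disjoint_left.mp (hP.2.1 q hq.1 p hp hne) hq.2) hj
  rw [thePair, hfil, Finset.singleton_biUnion, id]

lemma exists_pair {X : Finset ℤ} {P : Finset (Finset ℤ)} (hP : IsPairPartition X P)
    {j : ℤ} (hj : j ∈ X) : ∃ p ∈ P, j ∈ p := by
  rw [← hP.2.2] at hj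
  simpa using hj

lemma prod_thePair {X : Finset ℤ} {P : Finset (Finset ℤ)} (hP : IsPairPartition X P)
    (g : Finset ℤ → ℝ) : ∏ j ∈ X, g (thePair P j) = ∏ p ∈ P, g p ^ 2 := by
  rw [← hP.2.2, Finset.prod_biUnion (t := id) (fun p hp q hq hne => hP.2.1 p hp q hq hne)]
  refine Finset.prod_congr rfl fun p hp => ?_
  rw [Finset.prod_congr rfl (fun j hj => by rw [thePair_eq hP hp hj]),
    Finset.prod_const]
  simp only [id_eq]
  rw [hP.1 p hp, sq]

lemma Ksum_nonneg (P : Finset (Finset ℤ)) (k : ↥P → E3) (a b : ℤ) :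
    0 ≤ Ksum P k a b :=
  Finset.sum_nonneg fun _ _ => norm_nonneg _

lemma continuous_kOf (P : Finset (Finset ℤ)) (p : Finset ℤ) :
    Continuous (fun k : ↥P → E3 => kOf P k p) := by
  unfold kOf
  split
  · exact continuous_apply _
  · exact continuous_const

lemma continuous_Ksum (P : Finset (Finset ℤ)) (a b : ℤ) :
    Continuous (fun k : ↥P → E3 => Ksum P k a b) := by
  unfold Ksum
  exact continuous_finset_sum _ fun p _ => (continuous_kOf P p).norm

lemma sm_Gsharp (G : E3 → 𝓗 →L[ℂ] 𝓗) (hGmeas : StronglyMeasurable G)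
    (P : Finset (Finset ℤ)) (j : ℤ) :
    StronglyMeasurable (fun k : ↥P → E3 => Gsharp G P k j) := by
  have hg : StronglyMeasurable (fun k : ↥P → E3 => G (kOf P k (thePair P j))) :=
    hGmeas.comp_measurable (continuous_kOf P (thePair P j)).measurable
  unfold Gsharp
  split
  · exact (ContinuousLinearMap.adjoint (𝕜 := ℂ) (E := 𝓗) (F := 𝓗)).continuous.comp_stronglyMeasurable hg
  · exact hg

lemma norm_Gsharp (G : E3 → 𝓗 →L[ℂ] 𝓗) (P : Finset (Finset ℤ)) (k : ↥P → E3) (j : ℤ) :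
    ‖Gsharp G P k j‖ = ‖G (kOf P k (thePair P j))‖ := by
  unfold Gsharp
  split
  · exact LinearIsometryEquiv.norm_map _ _
  · rfl

lemma sm_list_prod {α : Type*} [MeasurableSpace α] (l : List ℤ) (g : ℤ → α → 𝓗 →L[ℂ] 𝓗)
    (h : ∀ j ∈ l, StronglyMeasurable (g j)) :
    StronglyMeasurable (fun k : α => (l.map fun j => g j k).prod) := by
  induction l with
  | nil => simpa using stronglyMeasurable_const
  | cons a t ih =>
    simp only [List.map_cons, List.prod_cons]
    exact (h a (by simp)).mul (ih fun j hj => h j (by simp [hj]))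

lemma contOn_list_prod {s : Set ℝ} (l : List ℤ) (g : ℤ → ℝ → 𝓗 →L[ℂ] 𝓗)
    (h : ∀ j ∈ l, ContinuousOn (g j) s) :
    ContinuousOn (fun r : ℝ => (l.map fun j => g j r).prod) s := by
  induction l with
  | nil => simpa using continuousOn_const
  | cons a t ih =>
    simp only [List.map_cons, List.prod_cons]
    exact (h a (by simp)).mul (ih fun j hj => h j (by simp [hj]))

end AuxLemmas

/-- **Lemma 4.6: contractions of bounded edge labels.**
Let `P` be any pair partition of the finite set `X ⊂ ℤ`.  Suppose each edge
label `F_e : [0,∞) → 𝓛(𝓗_at)` is operator-norm continuous and uniformly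
bounded, and `∫ ‖G(k)‖² dk < ∞`.  Then for every `r ≥ 0` the integrand
defining `𝒞_P(φ)(r)` is Bochner integrable, and `r ↦ 𝒞_P(φ)(r)` is a bounded,
operator-norm continuous function on `[0,∞)`. -/
theorem stmt12 {𝓗 : Type*} [NormedAddCommGroup 𝓗] [InnerProductSpace ℂ 𝓗]
    [CompleteSpace 𝓗]
    (G : E3 → 𝓗 →L[ℂ] 𝓗) (hGmeas : StronglyMeasurable G)
    (hGint : Integrable (fun k : E3 => ‖G k‖ ^ 2))
    (X : Finset ℤ)
    (P : Finset (Finset ℤ)) (hP : IsPairPartition X P)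
    (F : ℤ → ℝ → 𝓗 →L[ℂ] 𝓗)
    (hFcont : ∀ j ∈ X, j ≠ fmax X → ContinuousOn (F j) (Set.Ici (0 : ℝ)))
    (hFbdd : ∀ j ∈ X, j ≠ fmax X → ∃ M : ℝ, ∀ r : ℝ, 0 ≤ r → ‖F j r‖ ≤ M) :
    (∀ r : ℝ, 0 ≤ r → Integrable (contractionIntegrand G X P F r)) ∧
    ContinuousOn (contraction G X P F) (Set.Ici (0 : ℝ)) ∧
    (∃ M : ℝ, ∀ r : ℝ, 0 ≤ r → ‖contraction G X P F r‖ ≤ M) := by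
  classical
  have hMex : ∀ j : ℤ, ∃ Mj : ℝ, 0 ≤ Mj ∧
      (j ∈ X → j ≠ fmax X → ∀ r : ℝ, 0 ≤ r → ‖F j r‖ ≤ Mj) := by
    intro j
    by_cases h : j ∈ X ∧ j ≠ fmax X
    · obtain ⟨Mj, hMj⟩ := hFbdd j h.1 h.2
      exact ⟨Mj, le_trans (norm_nonneg _) (hMj 0 le_rfl), fun _ _ => hMj⟩
    · exact ⟨0, le_rfl, fun h1 h2 => absurd ⟨h1, h2⟩ h⟩
  choose M hM0 hM using hMex
  set B : ℤ → ℝ := fun j => if j = fmax X then 1 else M j with hBdef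
  set C : ℝ := ∏ j ∈ X, B j with hCdef
  set bound : (↥P → E3) → ℝ := fun k => C * ∏ p : ↥P, ‖G (k p)‖ ^ 2 with hbdef
  -- pointwise domination
  have key : ∀ r : ℝ, 0 ≤ r → ∀ k : ↥P → E3,
      ‖contractionIntegrand G X P F r k‖ ≤ bound k := by
    intro r hr k
    set f : ℤ → 𝓗 →L[ℂ] 𝓗 := fun j =>
      Gsharp G P k j * (if j = fmax X then 1 else F j (Ksum P k j (rX X j) + r)) with hfdef
    have h1 : ‖contractionIntegrand G X P F r k‖ ≤ ∏ j ∈ X, ‖f j‖ := by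
      refine le_trans (list_norm_prod_le _) (le_of_eq ?_)
      rw [List.map_map]
      have hperm := ((Finset.sort_perm_toList (r := (· ≤ ·)) X).map
        (fun j => ‖f j‖)).prod_eq
      simp only [Function.comp_def]
      rw [hperm, Finset.prod_map_toList]
    have h2 : ∀ j ∈ X, ‖f j‖ ≤ ‖G (kOf P k (thePair P j))‖ * B j := by
      intro j hj
      refine le_trans (norm_mul_le _ _) ?_
      rw [norm_Gsharp]
      refine mul_le_mul_of_nonneg_left ?_ (norm_nonneg _)
      by_cases hje : j = fmax X
      · simp only [hBdef, hje, if_pos rfl]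
        rw [ContinuousLinearMap.one_def]
        exact ContinuousLinearMap.norm_id_le
      · simp only [hBdef, if_neg hje]
        exact hM j hj hje _ (add_nonneg (Ksum_nonneg _ _ _ _) hr)
    have hkeq : ∀ i : ↥P, kOf P k (i : Finset ℤ) = k i := by
      intro i
      simp [kOf, i.2]
    calc ‖contractionIntegrand G X P F r k‖ ≤ ∏ j ∈ X, ‖f j‖ := h1
    _ ≤ ∏ j ∈ X, (‖G (kOf P k (thePair P j))‖ * B j) :=
        Finset.prod_le_prod (fun j _ => norm_nonneg _) h2
    _ = (∏ j ∈ X, ‖G (kOf P k (thePair P j))‖) * C := Finset.prod_mul_distrib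
    _ = (∏ p ∈ P, ‖G (kOf P k p)‖ ^ 2) * C := by
        rw [prod_thePair hP (fun p => ‖G (kOf P k p)‖)]
    _ = bound k := by
        rw [hbdef, ← Finset.prod_coe_sort P (fun p => ‖G (kOf P k p)‖ ^ 2)]
        simp only [hkeq]
        ring
  -- measurability of the integrand
  have smI : ∀ r : ℝ, 0 ≤ r → StronglyMeasurable (contractionIntegrand G X P F r) := by
    intro r hr
    have : StronglyMeasurable (fun k : ↥P → E3 =>
        ((X.sort (· ≤ ·)).map fun j => (fun (j : ℤ) (k : ↥P → E3) =>
          Gsharp G P k j *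
            (if j = fmax X then 1 else F j (Ksum P k j (rX X j) + r))) j k).prod) := by
      apply sm_list_prod
      intro j hj
      rw [Finset.mem_sort] at hj
      apply (sm_Gsharp G hGmeas P j).mul
      by_cases hje : j = fmax X
      · simp only [if_pos hje]
        exact stronglyMeasurable_const
      · simp only [if_neg hje]
        have hcont : Continuous (fun k : ↥P → E3 => F j (Ksum P k j (rX X j) + r)) := by
          refine (hFcont j hj hje).comp_continuous
            ((continuous_Ksum P _ _).add continuous_const) ?_
          intro k
          exact add_nonneg (Ksum_nonneg _ _ _ _) hr
        exact hcont.stronglyMeasurable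
    exact this
  -- integrability of the dominating function
  have hBnd : Integrable bound := by
    apply Integrable.const_mul
    exact Integrable.fintype_prod (𝕜 := ℝ) (f := fun (_ : ↥P) (x : E3) => ‖G x‖ ^ 2)
      (fun _ => hGint)
  have hInt : ∀ r : ℝ, 0 ≤ r → Integrable (contractionIntegrand G X P F r) := by
    intro r hr
    exact hBnd.mono' (smI r hr).aestronglyMeasurable
      (Filter.Eventually.of_forall (key r hr))
  refine ⟨hInt, ?_, ⟨∫ k : ↥P → E3, bound k, ?_⟩⟩
  · unfold contraction
    apply continuousOn_of_dominated (bound := bound)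
    · intro r hr
      exact (smI r hr).aestronglyMeasurable
    · intro r hr
      exact Filter.Eventually.of_forall (key r hr)
    · exact hBnd
    · apply Filter.Eventually.of_forall
      intro k
      have : ContinuousOn (fun r : ℝ =>
          ((X.sort (· ≤ ·)).map fun j => (fun (j : ℤ) (r : ℝ) =>
            Gsharp G P k j *
              (if j = fmax X then 1 else F j (Ksum P k j (rX X j) + r))) j r).prod)
          (Set.Ici (0 : ℝ)) := by
        apply contOn_list_prod
        intro j hj
        rw [Finset.mem_sort] at hj
        apply ContinuousOn.mul continuousOn_const
        by_cases hje : j = fmax X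
        · simp only [if_pos hje]
          exact continuousOn_const
        · simp only [if_neg hje]
          have hmaps : Set.MapsTo (fun r : ℝ => Ksum P k j (rX X j) + r)
              (Set.Ici (0 : ℝ)) (Set.Ici (0 : ℝ)) := by
            intro x hx
            exact add_nonneg (Ksum_nonneg _ _ _ _) hx
          exact (hFcont j hj hje).comp
            ((continuous_const.add continuous_id).continuousOn) hmaps
      exact this
  · intro r hr
    have : ‖∫ k : ↥P → E3, contractionIntegrand G X P F r k‖ ≤ ∫ k : ↥P → E3, bound k :=
      norm_integral_le_of_norm_le hBnd (Filter.Eventually.of_forall (key r hr))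
    exact this
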